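/- Fix 2 ≤ k ≤ n−2 and let A ⊆ Z/nZ be non-adjacent. Then the collection B = {J : J is a k-subset of Z/nZ and J ≠ C^{(i)} for all i ∈ A}, where C^{(i)} is the cyclic interval of length k starting at i, is the basis family of a matroid, and this matroid is sparse paving with its non-bases precisely the circuit-hyperplanes {C^{(i)} : i ∈ A}. -/

import Mathlib

/-- `B` is the family of bases of a matroid on the whole type `α` as ground set:
it is nonempty and satisfies the basis exchange axiom. -/
def ExchangeFamily {α : Type*} [DecidableEq α] (B : Set (Finset α)) : Prop :=
  B.Nonempty ∧
    ∀ b₁ ∈ B, ∀ b₂ ∈ B, ∀ e ∈ b₁, e ∉ b₂ →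
      ∃ f ∈ b₂, f ∉ b₁ ∧ insert f (b₁.erase e) ∈ B

/-- The cyclic interval `C^{(i)} = {i, i+1, ..., i+k-1}` of length `k` in `ZMod n`. -/
def cyclicInterval (n k : ℕ) (i : ZMod n) : Finset (ZMod n) :=
  (Finset.range k).image fun t : ℕ => i + (t : ZMod n)

/-- A set is independent if it is contained in some basis. -/
def IndepIn {α : Type*} (B : Set (Finset α)) (X : Finset α) : Prop :=
  ∃ b ∈ B, X ⊆ b

/-- The rank of a set `X`: the maximum of `|X ∩ b|` over bases `b`. -/
noncomputable def rkIn {α : Type*} [DecidableEq α] (B : Set (Finset α)) (X : Finset α) : ℕ :=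
  sSup ((fun b => (X ∩ b).card) '' B)

/-- The rank of the matroid: the (common) cardinality of the bases. -/
noncomputable def rankM {α : Type*} (B : Set (Finset α)) : ℕ :=
  sSup (Finset.card '' B)

/-- A circuit: a minimal dependent set. -/
def IsCircuitIn {α : Type*} [DecidableEq α] (B : Set (Finset α)) (C : Finset α) : Prop :=
  ¬ IndepIn B C ∧ ∀ X ⊂ C, IndepIn B X

/-- A flat: every strictly larger set has strictly larger rank. -/
def IsFlatIn {α : Type*} [DecidableEq α] (B : Set (Finset α)) (F : Finset α) : Prop :=
  ∀ G : Finset α, F ⊂ G → rkIn B F < rkIn B G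

/-- A circuit-hyperplane: both a circuit and a flat of rank `rank(M) - 1`. -/
def IsCircuitHyperplaneIn {α : Type*} [DecidableEq α] (B : Set (Finset α))
    (C : Finset α) : Prop :=
  IsCircuitIn B C ∧ IsFlatIn B C ∧ rkIn B C + 1 = rankM B

/-!
Removing from the `k`-subsets a family `N` of `k`-sets any two of which differ in at least two
elements leaves a sparse paving matroid: two `k`-sets that differ in a single element are never
both removed. Applied to `insert f (b₁.erase e)` for varying `f` this gives basis exchange, and
applied to `X ∈ N` and `insert x (X.erase y)` it shows that every `X ∈ N` is a
circuit-hyperplane. For non-adjacent `A`, the intervals `C^{(i)}` and `C^{(i+d)}` with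
`2 ≤ d ≤ n - 2` differ in the two elements `i + min d k - 1` and `i + min d k - 2` of
`C^{(i)}`, as `2 ≤ k ≤ n - 2`.
-/

open Finset

section SparsePaving

variable {α : Type*} {N : Set (Finset α)} {k : ℕ}

theorem exists_notMem_of_card_lt [Fintype α] {X : Finset α} (h : X.card < Fintype.card α) :
    ∃ x, x ∉ X := by
  obtain ⟨x, -, hx⟩ := exists_mem_notMem_of_card_lt_card (s := X) (t := univ) (by rwa [card_univ])
  exact ⟨x, hx⟩

def sparsePavingBases (N : Set (Finset α)) (k : ℕ) : Set (Finset α) :=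
  {J | J.card = k ∧ J ∉ N}

theorem setOf_card_eq_and_forall_ne {ι : Type*} (f : ι → Finset α) (A : Set ι) :
    {J : Finset α | J.card = k ∧ ∀ i ∈ A, J ≠ f i} = sparsePavingBases (f '' A) k := by
  ext J
  simp [sparsePavingBases, eq_comm]

theorem notMem_sparsePavingBases_iff {X : Finset α} (hX : X.card = k) :
    X ∉ sparsePavingBases N k ↔ X ∈ N := by
  simp [sparsePavingBases, hX]

variable [DecidableEq α]

theorem card_inter_le_of_mem_sparsePavingBases {b G : Finset α} (hb : b ∈ sparsePavingBases N k) :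
    (G ∩ b).card ≤ k :=
  hb.1 ▸ card_le_card inter_subset_right

theorem bddAbove_card_inter_sparsePavingBases (G : Finset α) :
    BddAbove ((fun b => (G ∩ b).card) '' sparsePavingBases N k) := by
  refine ⟨k, ?_⟩
  rintro _ ⟨b, hb, rfl⟩
  exact card_inter_le_of_mem_sparsePavingBases hb

variable (hN : N.Pairwise fun X Y => 2 ≤ (X \ Y).card)
include hN

theorem insert_eq_insert_of_mem {s : Finset α} {a b : α} (ha : insert a s ∈ N)
    (hb : insert b s ∈ N) : insert a s = insert b s := by
  refine hN.eq ha hb fun h2 => h2.not_gt ?_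
  have hsub : insert a s \ insert b s ⊆ {a} := by
    intro z hz
    simp only [mem_sdiff, mem_insert] at hz
    simp only [mem_singleton]
    tauto
  exact (card_le_card hsub).trans_lt (by simp)

theorem insert_erase_mem_sparsePavingBases {X : Finset α} (hX : X ∈ N) (hXk : X.card = k)
    {x y : α} (hx : x ∉ X) (hy : y ∈ X) : insert x (X.erase y) ∈ sparsePavingBases N k := by
  have hxy : x ∉ X.erase y := fun h => hx (mem_of_mem_erase h)
  refine ⟨?_, fun hxN => hx ?_⟩
  · rw [card_insert_of_notMem hxy, card_erase_of_mem hy, hXk]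
    have : 0 < k := hXk ▸ card_pos.2 ⟨y, hy⟩
    omega
  · rw [← insert_erase hy, insert_eq_insert_of_mem hN (by rwa [insert_erase hy]) hxN]
    exact mem_insert_self x _

theorem exchange_sparsePavingBases :
    ∀ b₁ ∈ sparsePavingBases N k, ∀ b₂ ∈ sparsePavingBases N k, ∀ e ∈ b₁, e ∉ b₂ →
      ∃ f ∈ b₂, f ∉ b₁ ∧ insert f (b₁.erase e) ∈ sparsePavingBases N k := by
  intro b₁ ⟨hb₁k, _⟩ b₂ ⟨hb₂k, hb₂N⟩ e he heb₂
  have hcard : ∀ f ∉ b₁, (insert f (b₁.erase e)).card = k := fun f hf => by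
    rw [card_insert_of_notMem fun h => hf (mem_of_mem_erase h), card_erase_of_mem he, hb₁k]
    have : 0 < k := hb₁k ▸ card_pos.2 ⟨e, he⟩
    omega
  by_contra! hbad
  have hN' : ∀ f ∈ b₂, f ∉ b₁ → insert f (b₁.erase e) ∈ N := fun f hf hfb₁ => by
    simpa [sparsePavingBases, hcard f hfb₁] using hbad f hf hfb₁
  obtain ⟨f, hf, hfb₁⟩ := not_subset.1 fun h : b₂ ⊆ b₁ =>
    heb₂ (eq_of_subset_of_card_le h (hb₁k.trans hb₂k.symm).le ▸ he)
  -- `b₂ ≠ insert f (b₁.erase e)`, so `b₂` has a second element `f'` outside `b₁`.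
  obtain ⟨f', hf', hf'Z⟩ := not_subset.1 fun h : b₂ ⊆ insert f (b₁.erase e) =>
    hb₂N (eq_of_subset_of_card_le h (by rw [hcard f hfb₁, hb₂k]) ▸ hN' f hf hfb₁)
  have hf'b₁ : f' ∉ b₁ := fun h =>
    hf'Z (mem_insert_of_mem (mem_erase.2 ⟨fun h' => heb₂ (h' ▸ hf'), h⟩))
  exact hf'Z (insert_eq_insert_of_mem hN (hN' f hf hfb₁) (hN' f' hf' hf'b₁) ▸ mem_insert_self _ _)

variable [Fintype α]

theorem sparsePavingBases_nonempty (hk : 0 < k) (hkα : k < Fintype.card α) :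
    (sparsePavingBases N k).Nonempty := by
  obtain ⟨J, -, hJk⟩ :=
    exists_subset_card_eq (s := (univ : Finset α)) (n := k) (by rw [card_univ]; omega)
  by_cases hJN : J ∈ N
  · obtain ⟨x, hx⟩ := exists_notMem_of_card_lt (hJk ▸ hkα)
    obtain ⟨y, hy⟩ := card_pos.1 (hJk ▸ hk)
    exact ⟨_, insert_erase_mem_sparsePavingBases hN hJN hJk hx hy⟩
  · exact ⟨J, hJk, hJN⟩

theorem isCircuitHyperplaneIn_sparsePavingBases {X : Finset α} (hX : X ∈ N) (hXk : X.card = k)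
    (hk : 0 < k) (hkα : k < Fintype.card α) :
    IsCircuitHyperplaneIn (sparsePavingBases N k) X := by
  obtain ⟨x, hx⟩ := exists_notMem_of_card_lt (hXk ▸ hkα)
  have hdep : ¬ IndepIn (sparsePavingBases N k) X := fun ⟨b, ⟨hbk, hbN⟩, hXb⟩ =>
    hbN (eq_of_subset_of_card_le hXb (hbk.trans hXk.symm).le ▸ hX)
  have hrkX : rkIn (sparsePavingBases N k) X = k - 1 := by
    obtain ⟨y, hy⟩ := card_pos.1 (hXk ▸ hk)
    refine IsGreatest.csSup_eq ⟨⟨_, insert_erase_mem_sparsePavingBases hN hX hXk hx hy, ?_⟩, ?_⟩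
    · change (X ∩ insert x (X.erase y)).card = k - 1
      rw [inter_insert_of_notMem hx, inter_eq_right.2 (erase_subset y X), card_erase_of_mem hy,
        hXk]
    · rintro _ ⟨b, hb, rfl⟩
      have hle : (X ∩ b).card ≤ k := card_inter_le_of_mem_sparsePavingBases hb
      have hne : (X ∩ b).card ≠ k := fun h => hdep ⟨b, hb,
        (eq_of_subset_of_card_le inter_subset_left (h.trans hXk.symm).ge) ▸ inter_subset_right⟩
      change (X ∩ b).card ≤ k - 1
      omega
  refine ⟨⟨hdep, fun Y hYX => ?_⟩, fun G hXG => ?_, ?_⟩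
  · obtain ⟨y, hyX, hyY⟩ := not_subset.1 hYX.2
    refine ⟨_, insert_erase_mem_sparsePavingBases hN hX hXk hx hyX, fun z hz => ?_⟩
    exact mem_insert_of_mem (mem_erase.2 ⟨by rintro rfl; exact hyY hz, hYX.1 hz⟩)
  · obtain ⟨x', hx'G, hx'X⟩ := exists_of_ssubset hXG
    obtain ⟨y, hy⟩ := card_pos.1 (hXk ▸ hk)
    have hb := insert_erase_mem_sparsePavingBases hN hX hXk hx'X hy
    have hbG : insert x' (X.erase y) ⊆ G := insert_subset hx'G ((erase_subset y X).trans hXG.1)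
    have hk_le : k ≤ rkIn (sparsePavingBases N k) G := by
      refine le_csSup (bddAbove_card_inter_sparsePavingBases G) ⟨_, hb, ?_⟩
      change (G ∩ _).card = k
      rw [inter_eq_right.2 hbG, hb.1]
    omega
  · have hrank : rankM (sparsePavingBases N k) = k := by
      obtain ⟨b, hb⟩ := sparsePavingBases_nonempty hN hk hkα
      exact IsGreatest.csSup_eq ⟨⟨b, hb, hb.1⟩, by rintro _ ⟨b', hb', rfl⟩; exact hb'.1.le⟩
    omega

end SparsePaving

section CyclicInterval

variable {n k : ℕ}

theorem add_natCast_mem_cyclicInterval (i : ZMod n) {m : ℕ} (hm : m < k) :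
    i + (m : ZMod n) ∈ cyclicInterval n k i :=
  mem_image.2 ⟨m, mem_range.2 hm, rfl⟩

variable [NeZero n]

theorem mem_cyclicInterval_iff (hkn : k ≤ n) {i x : ZMod n} :
    x ∈ cyclicInterval n k i ↔ (x - i).val < k := by
  simp only [cyclicInterval, mem_image, mem_range]
  constructor
  · rintro ⟨t, ht, rfl⟩
    rwa [add_sub_cancel_left, ZMod.val_cast_of_lt (ht.trans_le hkn)]
  · exact fun h => ⟨(x - i).val, h, by rw [ZMod.natCast_zmod_val, add_sub_cancel]⟩

theorem add_natCast_notMem_cyclicInterval (i : ZMod n) {m d : ℕ} (hmd : m < d) (hdn : d ≤ n)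
    (hk : k ≤ m + n - d) : i + (m : ZMod n) ∉ cyclicInterval n k (i + d) := by
  have hsub : i + (m : ZMod n) - (i + d) = ((m + n - d : ℕ) : ZMod n) := by
    rw [Nat.cast_sub (by omega), Nat.cast_add, ZMod.natCast_self]
    ring
  rw [mem_cyclicInterval_iff (by omega), hsub, ZMod.val_cast_of_lt (by omega)]
  omega

theorem two_le_card_sdiff_cyclicInterval (hk : 2 ≤ k) (hkn : k + 2 ≤ n) (i : ZMod n) {d : ℕ}
    (hd : 2 ≤ d) (hdn : d + 2 ≤ n) :
    2 ≤ (cyclicInterval n k i \ cyclicInterval n k (i + d)).card := by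
  set a := min d k - 1
  have hmem : ∀ m, a - 1 ≤ m → m ≤ a →
      i + (m : ZMod n) ∈ cyclicInterval n k i \ cyclicInterval n k (i + d) := fun m h₁ h₂ =>
    mem_sdiff.2 ⟨add_natCast_mem_cyclicInterval i (by omega),
      add_natCast_notMem_cyclicInterval i (by omega) (by omega) (by omega)⟩
  refine one_lt_card.2 ⟨_, hmem a (by omega) le_rfl, _, hmem (a - 1) le_rfl (by omega), ?_⟩
  intro h
  have := congrArg ZMod.val (add_left_cancel h)
  rw [ZMod.val_cast_of_lt (by omega), ZMod.val_cast_of_lt (by omega)] at this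
  omega

theorem two_le_val_and_val_add_two_le {z : ZMod n} (h₀ : z ≠ 0) (h₁ : z ≠ 1) (hneg : z ≠ -1) :
    2 ≤ z.val ∧ z.val + 2 ≤ n := by
  have hlt := z.val_lt
  have hv₀ : z.val ≠ 0 := fun h => h₀ ((ZMod.val_eq_zero z).1 h)
  have hv₁ : z.val ≠ 1 := fun h => h₁ (by rw [← ZMod.natCast_zmod_val z, h, Nat.cast_one])
  have hvneg : z.val ≠ n - 1 := fun h => hneg (by
    rw [← ZMod.natCast_zmod_val z, h, Nat.cast_sub NeZero.one_le, ZMod.natCast_self, Nat.cast_one,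
      zero_sub])
  omega

theorem pairwise_two_le_card_sdiff_cyclicInterval (hk : 2 ≤ k) (hkn : k + 2 ≤ n)
    {A : Set (ZMod n)} (hA : ∀ i ∈ A, (i + 1) ∉ A ∧ (i - 1) ∉ A) :
    (cyclicInterval n k '' A).Pairwise fun X Y => 2 ≤ (X \ Y).card := by
  rintro _ ⟨i, hi, rfl⟩ _ ⟨j, hj, rfl⟩ hne
  have h₀ : j - i ≠ 0 := fun h => hne (by rw [sub_eq_zero.1 h])
  have h₁ : j - i ≠ 1 := fun h => (hA i hi).1 (by rwa [← sub_eq_iff_eq_add'.1 h])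
  have hneg : j - i ≠ -1 := fun h => (hA i hi).2 (by rwa [show i - 1 = j by linear_combination -h])
  obtain ⟨hd, hdn⟩ := two_le_val_and_val_add_two_le h₀ h₁ hneg
  simpa [ZMod.natCast_zmod_val] using two_le_card_sdiff_cyclicInterval hk hkn i hd hdn

end CyclicInterval

/-- For `2 ≤ k ≤ n - 2` and a non-adjacent `A ⊆ ZMod n`, the collection of `k`-subsets
of `ZMod n` different from every cyclic interval `C^{(i)}`, `i ∈ A`, is the basis family
of a matroid; this matroid is sparse paving, with non-bases precisely the sets
`C^{(i)}` for `i ∈ A`, and all of these non-bases are circuit-hyperplanes. -/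
theorem nonAdjacent_gives_sparsePaving_matroid (n k : ℕ) (hk : 2 ≤ k) (hkn : k + 2 ≤ n)
    (A : Set (ZMod n)) (hA : ∀ i ∈ A, (i + 1) ∉ A ∧ (i - 1) ∉ A) :
    ExchangeFamily {J : Finset (ZMod n) | J.card = k ∧ ∀ i ∈ A, J ≠ cyclicInterval n k i} ∧
    (∀ X : Finset (ZMod n), X.card = k →
      (X ∉ {J : Finset (ZMod n) | J.card = k ∧ ∀ i ∈ A, J ≠ cyclicInterval n k i} ↔
        ∃ i ∈ A, X = cyclicInterval n k i)) ∧
    (∀ X : Finset (ZMod n), X.card = k →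
      X ∉ {J : Finset (ZMod n) | J.card = k ∧ ∀ i ∈ A, J ≠ cyclicInterval n k i} →
      IsCircuitHyperplaneIn
        {J : Finset (ZMod n) | J.card = k ∧ ∀ i ∈ A, J ≠ cyclicInterval n k i} X) := by
  have : NeZero n := ⟨by omega⟩
  have hN := pairwise_two_le_card_sdiff_cyclicInterval hk hkn hA
  have hkn' : k < Fintype.card (ZMod n) := by rw [ZMod.card]; omega
  rw [setOf_card_eq_and_forall_ne]
  refine ⟨⟨sparsePavingBases_nonempty hN (by omega) hkn', exchange_sparsePavingBases hN⟩,
    fun X hX => ?_, fun X hX hXN => ?_⟩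
  · rw [notMem_sparsePavingBases_iff hX, Set.mem_image]
    simp only [eq_comm]
  · exact isCircuitHyperplaneIn_sparsePavingBases hN ((notMem_sparsePavingBases_iff hX).1 hXN) hX
      (by omega) hkn'
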